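/- Let A be a real m×n matrix, b ∈ ℝ^m, and assume V = {v ∈ ℝ^n : A v ≥ b} is nonempty and bounded. Let (x^i, c^i), i = 1,…,N, be data with x^i ∈ ℝ^K and c^i ∈ ℝ^n. Then the infimum over ω ∈ ℝ^{n×K} of the pessimistic value Λ(ω) = sup{(1/N) Σ_{i=1}^N c^i · v^i : v^i ∈ V*(ω x^i) for each i} equals the infimum of Σ_{i=1}^N (b · μ^i + (ω x^i) · δ^i) over all ω ∈ ℝ^{n×K} and (μ^i, δ^i, γ^i)_{i=1}^N with μ^i ∈ ℝ^m, δ^i ∈ ℝ^n, γ^i ∈ ℝ satisfying A^T μ^i + γ^i (ω x^i) = (1/N) c^i, A δ^i − γ^i b ≥ 0, μ^i ≤ 0 and γ^i ≥ 0 for all i. -/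

import Mathlib

open Matrix Set BigOperators

noncomputable section

/-- The polyhedron `V = {v : A v ≥ b}` (inequalities entrywise). -/
def polyV {m n : ℕ} (A : Matrix (Fin m) (Fin n) ℝ) (b : Fin m → ℝ) : Set (Fin n → ℝ) :=
  {v | b ≤ A.mulVec v}

/-- `z*(c)`: the optimal (infimum) value of `c · v` over `V`. -/
noncomputable def zstar {m n : ℕ} (A : Matrix (Fin m) (Fin n) ℝ) (b : Fin m → ℝ)
    (c : Fin n → ℝ) : ℝ :=
  sInf ((fun v => c ⬝ᵥ v) '' polyV A b)

/-- `V*(c)`: the set of optimal solutions of `min {c · v : v ∈ V}`. -/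
def Vstar {m n : ℕ} (A : Matrix (Fin m) (Fin n) ℝ) (b : Fin m → ℝ)
    (c : Fin n → ℝ) : Set (Fin n → ℝ) :=
  {v ∈ polyV A b | c ⬝ᵥ v = zstar A b c}

/-- The pessimistic value `Λ(ω)` of the linear model `ω`. -/
noncomputable def pessValue {m n N K : ℕ} (A : Matrix (Fin m) (Fin n) ℝ) (b : Fin m → ℝ)
    (x : Fin N → Fin K → ℝ) (c : Fin N → Fin n → ℝ)
    (ω : Matrix (Fin n) (Fin K) ℝ) : ℝ :=
  sSup {r : ℝ | ∃ v : Fin N → Fin n → ℝ,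
    (∀ i, v i ∈ Vstar A b (ω.mulVec (x i))) ∧
    r = (1 / (N : ℝ)) * ∑ i, c i ⬝ᵥ v i}

/-! For a fixed model `ω` the pessimistic value splits into `N` independent inner problems
`max {(cⁱ/N) · v : v ∈ V*(ĉⁱ)}` with `ĉⁱ = ω xⁱ`. The face `V*(ĉ)` is the polytope
`{A v ≥ b, ĉ · v ≤ z*(ĉ)}`, so by LP duality each maximum equals the least value of
`b · μ + γ z*(ĉ)` over `μ ≤ 0`, `γ ≥ 0` with `Aᵀ μ + γ ĉ = cⁱ/N`; and since
`γ z*(ĉ) = min {ĉ · δ : A δ ≥ γ b}`, this is the least value of `b · μ + ĉ · δ` over the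
certificates `(μ, δ, γ)` of the statement. Thus `Λ(ω)` is the least dual objective value with
that `ω`, and taking infima over `ω` on both sides gives the equality.

LP duality comes from Farkas' lemma, i.e. hyperplane separation from a finitely generated cone;
such a cone is closed because, by the conic Carathéodory argument, it is a finite union of images
of orthants under injective linear maps. -/

namespace PointedCone

variable {ι E : Type*} [Fintype ι]

lemma exists_nonneg_sum_smul_eq_support_ssubset [AddCommGroup E] [Module ℝ E]
    {w : ι → E} {l g : ι → ℝ} (hl : 0 ≤ l) (hg : ∑ i, g i • w i = 0)
    (hgl : Function.support g ⊆ Function.support l) (hg0 : g ≠ 0) :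
    ∃ l' : ι → ℝ, 0 ≤ l' ∧ ∑ i, l' i • w i = ∑ i, l i • w i ∧
      Function.support l' ⊂ Function.support l := by
  classical
  wlog hpos : ∃ i, 0 < g i generalizing g
  · refine this (g := -g) (by simp [hg]) (by simpa using hgl) (neg_ne_zero.mpr hg0) ?_
    obtain ⟨i, hi⟩ := Function.ne_iff.mp hg0
    exact ⟨i, by simpa using (le_of_not_gt fun h => hpos ⟨i, h⟩).lt_of_ne hi⟩
  -- move from `l` along `-g` until the first coordinate of `l` hits zero
  obtain ⟨i₀, hi₀, hmin⟩ := (Finset.univ.filter (0 < g ·)).exists_min_image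
    (fun i => l i / g i) (by simpa [Finset.Nonempty] using hpos)
  rw [Finset.mem_filter] at hi₀
  set r := l i₀ / g i₀
  have hr : 0 ≤ r := div_nonneg (hl i₀) hi₀.2.le
  refine ⟨l - r • g, fun i => ?_, ?_, ?_⟩
  · rcases lt_or_ge 0 (g i) with hgi | hgi
    · simpa [← le_div_iff₀ hgi] using hmin i (by simpa using hgi)
    · simpa using (mul_nonpos_of_nonneg_of_nonpos hr hgi).trans (hl i)
  · simp [sub_smul, Finset.sum_sub_distrib, mul_smul, ← Finset.smul_sum, hg]
  · have hsub : Function.support (l - r • g) ⊆ Function.support l := fun i hi => by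
      by_contra hli
      have hgi : g i = 0 := by_contra fun h => hli (hgl h)
      simp_all
    refine (Set.ssubset_iff_of_subset hsub).mpr ⟨i₀, hgl hi₀.2.ne', ?_⟩
    simp [r, div_mul_cancel₀ _ hi₀.2.ne']

lemma exists_nonneg_linearIndepOn_support [AddCommGroup E] [Module ℝ E]
    (w : ι → E) {l : ι → ℝ} (hl : 0 ≤ l) :
    ∃ l' : ι → ℝ, 0 ≤ l' ∧ ∑ i, l' i • w i = ∑ i, l i • w i ∧
      LinearIndepOn ℝ w (Function.support l') := by
  obtain ⟨l', ⟨hl'0, hl'sum⟩, hmin⟩ :=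
    (measure fun l : ι → ℝ => (Function.support l).ncard).wf.has_min
      {l' | 0 ≤ l' ∧ ∑ i, l' i • w i = ∑ i, l i • w i} ⟨l, hl, rfl⟩
  refine ⟨l', hl'0, hl'sum, by_contra fun hdep => ?_⟩
  obtain ⟨f, hf, hfw, hf0⟩ := linearDepOn_iff'.mp hdep
  rw [Finsupp.linearCombination_apply, Finsupp.sum_fintype _ _ fun i => zero_smul ℝ (w i)] at hfw
  obtain ⟨l'', hl''0, hl''sum, hssub⟩ := exists_nonneg_sum_smul_eq_support_ssubset hl'0 hfw
    (by simpa [Finsupp.mem_supported] using hf) (by simpa [DFunLike.ext_iff, funext_iff] using hf0)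
  exact hmin l'' ⟨hl''0, hl''sum.trans hl'sum⟩ (Set.ncard_lt_ncard hssub (Set.toFinite _))

lemma mem_hull_range_iff [AddCommGroup E] [Module ℝ E] {w : ι → E} {x : E} :
    x ∈ hull ℝ (range w) ↔ ∃ l : ι → ℝ, 0 ≤ l ∧ ∑ i, l i • w i = x := by
  rw [Submodule.mem_span_range_iff_exists_fun]
  exact ⟨fun ⟨c, hc⟩ => ⟨fun i => c i, fun i => (c i).2, hc⟩,
    fun ⟨l, hl, hlx⟩ => ⟨fun i => ⟨l i, hl i⟩, hlx⟩⟩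

theorem isClosed_hull_range [NormedAddCommGroup E] [NormedSpace ℝ E] [FiniteDimensional ℝ E]
    (w : ι → E) : IsClosed (hull ℝ (range w) : Set E) := by
  classical
  have hunion : (hull ℝ (range w) : Set E) = ⋃ (s : Finset ι) (_ : LinearIndepOn ℝ w s),
      Fintype.linearCombination ℝ (fun i : s => w i) '' Ici 0 := by
    ext x
    simp only [SetLike.mem_coe, mem_hull_range_iff, mem_iUnion, mem_image,
      Fintype.linearCombination_apply]
    constructor
    · rintro ⟨l, hl, rfl⟩
      obtain ⟨l', hl'0, hl'sum, hind⟩ := exists_nonneg_linearIndepOn_support w hl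
      refine ⟨(Function.support l').toFinset, by simpa using hind, fun i => l' i,
        fun i => hl'0 i, ?_⟩
      rw [← hl'sum, Finset.sum_coe_sort (f := fun i => l' i • w i)]
      exact Finset.sum_subset (Finset.subset_univ _) fun i _ hi => by simp_all
    · rintro ⟨s, -, l, hl : 0 ≤ l, rfl⟩
      refine ⟨fun i => if h : i ∈ s then l ⟨i, h⟩ else 0,
        fun i => dite_nonneg (fun h => hl ⟨i, h⟩) fun _ => le_rfl, ?_⟩
      rw [← Finset.sum_subset (Finset.subset_univ s) fun i _ hi => by simp [hi],
        ← Finset.sum_coe_sort]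
      simp
  rw [hunion]
  refine isClosed_iUnion_of_finite fun s => isClosed_iUnion_of_finite fun hind => ?_
  have hinj := LinearMap.ker_eq_bot.mpr hind.linearIndependent.fintypeLinearCombination_injective
  exact (LinearMap.isClosedEmbedding_of_injective hinj).isClosedMap _ isClosed_Ici

end PointedCone

section LinearProgramming

variable {ι κ : Type*} [Fintype κ]

theorem exists_nonneg_vecMul_eq_of_forall_nonneg [Fintype ι] (M : Matrix ι κ ℝ) (d : κ → ℝ)
    (h : ∀ z, 0 ≤ M *ᵥ z → 0 ≤ d ⬝ᵥ z) : ∃ y, 0 ≤ y ∧ y ᵥ* M = d := by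
  classical
  let C : ProperCone ℝ (κ → ℝ) :=
    ⟨PointedCone.hull ℝ (range M), PointedCone.isClosed_hull_range M⟩
  have hdC : d ∈ C := by
    by_contra hdC
    obtain ⟨f, hfC, hfd⟩ := C.hyperplane_separation_point hdC
    have hf : ∀ u, f u = u ⬝ᵥ fun j => f fun k => if j = k then 1 else 0 := fun u => by
      simpa [dotProduct] using LinearMap.pi_apply_eq_sum_univ f.toLinearMap u
    have := h _ fun i => (hf (M i)).symm.trans_ge (hfC _ (PointedCone.subset_hull ⟨i, rfl⟩))
    linarith [hf d]
  obtain ⟨y, hy, hyd⟩ := PointedCone.mem_hull_range_iff.mp hdC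
  exact ⟨y, hy, by rwa [vecMul_eq_sum]⟩

variable {M : Matrix ι κ ℝ} {q : ι → ℝ} {d : κ → ℝ} {S : ℝ}

lemma dotProduct_nonpos_of_mulVec_nonpos {v₀ v : κ → ℝ} (hv₀ : M *ᵥ v₀ ≤ q)
    (hS : ∀ v, M *ᵥ v ≤ q → d ⬝ᵥ v ≤ S) (hv : M *ᵥ v ≤ 0) : d ⬝ᵥ v ≤ 0 := by
  by_contra! hdv
  set k := (|S - d ⬝ᵥ v₀| + 1) / (d ⬝ᵥ v)
  have hk : 0 ≤ k := by positivity
  have hray : M *ᵥ (v₀ + k • v) ≤ q := fun i => by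
    simpa [mulVec_add, mulVec_smul] using
      add_le_of_le_of_nonpos (hv₀ i) (mul_nonpos_of_nonneg_of_nonpos hk (hv i))
  have := hS _ hray
  rw [dotProduct_add, dotProduct_smul, smul_eq_mul, div_mul_cancel₀ _ hdv.ne'] at this
  linarith [le_abs_self (S - d ⬝ᵥ v₀)]

lemma dotProduct_le_mul_of_mulVec_le_smul {v₀ v : κ → ℝ} {t : ℝ} (hv₀ : M *ᵥ v₀ ≤ q)
    (hS : ∀ v, M *ᵥ v ≤ q → d ⬝ᵥ v ≤ S) (ht : 0 ≤ t) (hv : M *ᵥ v ≤ t • q) :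
    d ⬝ᵥ v ≤ t * S := by
  rcases ht.eq_or_lt with rfl | ht
  · simpa using dotProduct_nonpos_of_mulVec_nonpos hv₀ hS (by simpa using hv)
  · have := hS (t⁻¹ • v) fun i => by simpa [mulVec_smul, inv_mul_le_iff₀ ht] using hv i
    rwa [dotProduct_smul, smul_eq_mul, inv_mul_le_iff₀ ht] at this

theorem exists_nonneg_vecMul_eq_dotProduct_le [Fintype ι] (hfeas : ∃ v, M *ᵥ v ≤ q)
    (hS : ∀ v, M *ᵥ v ≤ q → d ⬝ᵥ v ≤ S) : ∃ y, 0 ≤ y ∧ y ᵥ* M = d ∧ q ⬝ᵥ y ≤ S := by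
  obtain ⟨v₀, hv₀⟩ := hfeas
  -- Farkas for the homogenized system `-M v + t q ≥ 0`, `t ≥ 0`
  obtain ⟨y, hy, hyM⟩ := exists_nonneg_vecMul_eq_of_forall_nonneg
    (fromBlocks (-M) (replicateCol Unit q) (0 : Matrix Unit κ ℝ) 1) (Sum.elim (-d) fun _ => S)
    fun z hz => by
      obtain ⟨v, t, rfl⟩ : ∃ v t, z = Sum.elim v fun _ => t :=
        ⟨z ∘ Sum.inl, z (Sum.inr ()), by ext (_ | _) <;> rfl⟩
      have hcol : replicateCol Unit q *ᵥ (fun _ => t) = t • q := by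
        ext; simp [mulVec, mul_comm]
      rw [fromBlocks_mulVec, Sum.elim_comp_inl, Sum.elim_comp_inr, hcol, ← Sum.elim_zero_zero,
        Sum.elim_le_elim_iff] at hz
      have := dotProduct_le_mul_of_mulVec_le_smul hv₀ hS (by simpa using hz.2 ())
        (by simpa [neg_mulVec, ← sub_eq_neg_add] using hz.1)
      rw [sumElim_dotProduct_sumElim, neg_dotProduct, dotProduct_pUnit]
      linarith
  rw [vecMul_fromBlocks] at hyM
  have hyd := congrArg (· ∘ Sum.inl) hyM
  have hyS := congrFun hyM (Sum.inr ())
  simp only [Sum.elim_comp_inl, Sum.elim_inr, vecMul_neg, vecMul_zero, add_zero, neg_inj] at hyd hyS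
  have hqy : q ⬝ᵥ (y ∘ Sum.inl) + y (Sum.inr ()) = S := by
    simpa [mulVec_replicateCol_eq_const, dotProduct_comm q] using hyS
  have hyu : 0 ≤ y (Sum.inr ()) := hy _
  exact ⟨y ∘ Sum.inl, fun i => hy _, hyd, by linarith⟩

end LinearProgramming

section Polytope

variable {m n : ℕ} {A : Matrix (Fin m) (Fin n) ℝ} {b : Fin m → ℝ}

lemma isCompact_polyV (hbd : Bornology.IsBounded (polyV A b)) : IsCompact (polyV A b) :=
  Metric.isCompact_of_isClosed_isBounded
    (isClosed_le continuous_const (continuous_const.matrix_mulVec continuous_id)) hbd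

lemma zstar_le (hbd : Bornology.IsBounded (polyV A b)) (c : Fin n → ℝ) {v : Fin n → ℝ}
    (hv : v ∈ polyV A b) : zstar A b c ≤ c ⬝ᵥ v :=
  csInf_le ((isCompact_polyV hbd).image (continuous_const.dotProduct continuous_id)).bddBelow
    ⟨v, hv, rfl⟩

lemma Vstar_nonempty (hne : (polyV A b).Nonempty) (hbd : Bornology.IsBounded (polyV A b))
    (c : Fin n → ℝ) : (Vstar A b c).Nonempty :=
  ((isCompact_polyV hbd).image (continuous_const.dotProduct continuous_id)).sInf_mem
    (hne.image _)

lemma isCompact_Vstar (hbd : Bornology.IsBounded (polyV A b)) (c : Fin n → ℝ) :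
    IsCompact (Vstar A b c) :=
  (isCompact_polyV hbd).inter_right
    (isClosed_eq (continuous_const.dotProduct continuous_id) continuous_const)

lemma dotProduct_le_of_mem_Vstar (hbd : Bornology.IsBounded (polyV A b))
    {chat d v δ : Fin n → ℝ} {μ : Fin m → ℝ} {γ : ℝ} (hv : v ∈ Vstar A b chat)
    (hd : Aᵀ *ᵥ μ + γ • chat = d) (hδ : γ • b ≤ A *ᵥ δ) (hμ : μ ≤ 0) (hγ : 0 ≤ γ) :
    d ⬝ᵥ v ≤ b ⬝ᵥ μ + chat ⬝ᵥ δ := by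
  have hμv : μ ⬝ᵥ (A *ᵥ v) ≤ μ ⬝ᵥ b :=
    Finset.sum_le_sum fun j _ => mul_le_mul_of_nonpos_left (hv.1 j) (hμ j)
  -- `A (v + δ) ≥ (1 + γ) b`, so `(v + δ) / (1 + γ) ∈ V` and `ĉ · δ ≥ γ z*(ĉ)`
  have hfeas : (1 + γ)⁻¹ • (v + δ) ∈ polyV A b := fun j => by
    have := add_le_add (hv.1 j) (hδ j)
    simp only [Pi.smul_apply, smul_eq_mul, mulVec_smul, mulVec_add, Pi.add_apply] at this ⊢
    rw [le_inv_mul_iff₀ (by positivity)]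
    linarith
  have hopt := zstar_le hbd chat hfeas
  rw [← hv.2, dotProduct_smul, smul_eq_mul, le_inv_mul_iff₀ (by positivity),
    dotProduct_add] at hopt
  rw [← hd, add_dotProduct, smul_dotProduct, smul_eq_mul, mulVec_transpose,
    ← dotProduct_mulVec, dotProduct_comm b]
  linarith

lemma exists_dual_le_of_isMaxOn (hbd : Bornology.IsBounded (polyV A b))
    {chat d v : Fin n → ℝ} (hv : v ∈ Vstar A b chat)
    (hmax : IsMaxOn (d ⬝ᵥ ·) (Vstar A b chat) v) :
    ∃ (μ : Fin m → ℝ) (δ : Fin n → ℝ) (γ : ℝ), Aᵀ *ᵥ μ + γ • chat = d ∧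
      γ • b ≤ A *ᵥ δ ∧ μ ≤ 0 ∧ 0 ≤ γ ∧ b ⬝ᵥ μ + chat ⬝ᵥ δ ≤ d ⬝ᵥ v := by
  have hfeas : ∀ w, fromRows (-A) (replicateRow Unit chat) *ᵥ w ≤
      Sum.elim (-b) (fun _ => zstar A b chat) ↔ w ∈ Vstar A b chat := fun w => by
    simp only [fromRows_mulVec, Sum.elim_le_elim_iff, neg_mulVec, neg_le_neg_iff,
      replicateRow_mulVec_eq_const]
    exact and_congr_right fun hw =>
      ⟨fun h => le_antisymm (h ()) (zstar_le hbd chat hw), fun h _ => h.le⟩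
  obtain ⟨y, hy, hyA, hyq⟩ := exists_nonneg_vecMul_eq_dotProduct_le ⟨v, (hfeas v).2 hv⟩
    fun w hw => hmax ((hfeas w).1 hw)
  refine ⟨-(y ∘ Sum.inl), y (Sum.inr ()) • v, y (Sum.inr ()), ?_, ?_, ?_, hy _, ?_⟩
  · ext k
    simp [← hyA, vecMul, dotProduct, mulVec, mul_comm]
  · rw [mulVec_smul]
    exact smul_le_smul_of_nonneg_left hv.1 (hy _)
  · exact neg_nonpos.mpr fun i => hy _
  · rw [← Sum.elim_comp_inl_inr y, sumElim_dotProduct_sumElim, neg_dotProduct,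
      dotProduct_pUnit] at hyq
    rwa [dotProduct_neg, dotProduct_smul, smul_eq_mul, hv.2, mul_comm]

end Polytope

lemma isLeast_csSup_of_forall_le {α : Type*} [ConditionallyCompleteLattice α] {P D : Set α}
    (hPD : ∀ p ∈ P, ∀ r ∈ D, p ≤ r) {p r : α} (hp : p ∈ P) (hr : r ∈ D) (hrp : r ≤ p) :
    IsLeast D (sSup P) := by
  have hpr : p = r := le_antisymm (hPD p hp r hr) hrp
  rw [(show IsGreatest P p from ⟨hp, fun p' hp' => hpr ▸ hPD p' hp' r hr⟩).csSup_eq, hpr]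
  exact ⟨hr, fun r' hr' => hpr ▸ hPD p hp r' hr'⟩

def dualValues {m n N K : ℕ} (A : Matrix (Fin m) (Fin n) ℝ) (b : Fin m → ℝ)
    (x : Fin N → Fin K → ℝ) (c : Fin N → Fin n → ℝ) (ω : Matrix (Fin n) (Fin K) ℝ) : Set ℝ :=
  {r : ℝ | ∃ (μ : Fin N → Fin m → ℝ) (δ : Fin N → Fin n → ℝ) (γ : Fin N → ℝ),
    (∀ i, Aᵀ.mulVec (μ i) + γ i • ω.mulVec (x i) = (1 / (N : ℝ)) • c i ∧
      γ i • b ≤ A.mulVec (δ i) ∧ μ i ≤ 0 ∧ 0 ≤ γ i) ∧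
    r = ∑ i, (b ⬝ᵥ μ i + ω.mulVec (x i) ⬝ᵥ δ i)}

theorem isLeast_dualValues_pessValue {m n N K : ℕ} {A : Matrix (Fin m) (Fin n) ℝ}
    {b : Fin m → ℝ} (hne : (polyV A b).Nonempty) (hbd : Bornology.IsBounded (polyV A b))
    (x : Fin N → Fin K → ℝ) (c : Fin N → Fin n → ℝ) (ω : Matrix (Fin n) (Fin K) ℝ) :
    IsLeast (dualValues A b x c ω) (pessValue A b x c ω) := by
  have hmean : ∀ v : Fin N → Fin n → ℝ,
      (1 / (N : ℝ)) * ∑ i, c i ⬝ᵥ v i = ∑ i, ((1 / (N : ℝ)) • c i) ⬝ᵥ v i := fun v => by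
    simp only [Finset.mul_sum, smul_dotProduct, smul_eq_mul]
  choose v hv hvmax using fun i => (isCompact_Vstar hbd (ω *ᵥ x i)).exists_isMaxOn
    (Vstar_nonempty hne hbd _)
    (continuous_const.dotProduct continuous_id (A := fun _ => (1 / (N : ℝ)) • c i)).continuousOn
  choose μ δ γ hd hδ hμ hγ hle using fun i => exists_dual_le_of_isMaxOn hbd (hv i) (hvmax i)
  refine isLeast_csSup_of_forall_le ?_ ⟨v, hv, rfl⟩
    ⟨μ, δ, γ, fun i => ⟨hd i, hδ i, hμ i, hγ i⟩, rfl⟩ ?_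
  · rintro _ ⟨v', hv', rfl⟩ _ ⟨μ', δ', γ', hdual, rfl⟩
    rw [hmean]
    refine Finset.sum_le_sum fun i _ => ?_
    obtain ⟨hd', hδ', hμ', hγ'⟩ := hdual i
    exact dotProduct_le_of_mem_Vstar hbd (hv' i) hd' hδ' hμ' hγ'
  · rw [hmean]
    exact Finset.sum_le_sum fun i _ => hle i

theorem stmt_5 (m n N K : ℕ)
    (A : Matrix (Fin m) (Fin n) ℝ) (b : Fin m → ℝ)
    (hne : (polyV A b).Nonempty) (hbd : Bornology.IsBounded (polyV A b))
    (x : Fin N → Fin K → ℝ) (c : Fin N → Fin n → ℝ) :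
    sInf (Set.range fun ω : Matrix (Fin n) (Fin K) ℝ => pessValue A b x c ω) =
    sInf {r : ℝ | ∃ (ω : Matrix (Fin n) (Fin K) ℝ) (μ : Fin N → Fin m → ℝ)
        (δ : Fin N → Fin n → ℝ) (γ : Fin N → ℝ),
        (∀ i, Aᵀ.mulVec (μ i) + γ i • ω.mulVec (x i) = (1 / (N : ℝ)) • c i ∧
          γ i • b ≤ A.mulVec (δ i) ∧ μ i ≤ 0 ∧ 0 ≤ γ i) ∧
        r = ∑ i, (b ⬝ᵥ μ i + ω.mulVec (x i) ⬝ᵥ δ i)} := by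
  have hleast := isLeast_dualValues_pessValue hne hbd x c
  apply csInf_eq_csInf_of_forall_exists_le
  · rintro _ ⟨ω, rfl⟩
    exact ⟨_, ⟨ω, (hleast ω).1⟩, le_rfl⟩
  · rintro r ⟨ω, hr⟩
    exact ⟨_, ⟨ω, rfl⟩, (hleast ω).2 hr⟩
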